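/- arXiv:1610.05961 — 5 statements merged into one kernel-verified Lean document; each statement's English description precedes it below -/
import Mathlib

section
/- Under the Uniform popularity distribution and M = o(K), the communication cost of Strategy I is C = Θ(√(K/M)) as n → ∞ (with K = K(n), M = M(n) in the regimes of the model). -/
open scoped Classical BigOperators
open Filter

/-- Nodes of the `m × m` torus grid (a `√n × √n` grid with wrap-around, `n = m²`). -/
abbrev Node (m : ℕ) := Fin m × Fin m

/-- Wrap-around distance between two coordinates in `Fin m`. -/
def cdist {m : ℕ} (a b : Fin m) : ℕ :=
  min ((a.val + m - b.val) % m) ((b.val + m - a.val) % m)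

/-- Graph (shortest-path) distance on the torus grid. -/
def torusDist {m : ℕ} (u v : Node m) : ℕ := cdist u.1 v.1 + cdist u.2 v.2

/-- A cache placement: each of the `m²` nodes fills `M` cache slots with files from a
library of `K` files.  Under the Uniform popularity distribution the random placement
is uniform over all such functions (each slot i.i.d. uniform on the `K` files). -/
abbrev Placement (m M K : ℕ) := Node m → Fin M → Fin K

/-- Node `u` has cached file `j`. -/
def cached {m M K : ℕ} (ω : Placement m M K) (u : Node m) (j : Fin K) : Prop :=
  ∃ i, ω u i = j

/-- Probability of an event under the uniform measure on a finite type. -/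
noncomputable def unifProb {Ω : Type*} [Fintype Ω] (E : Set Ω) : ℝ :=
  ((Finset.univ.filter (fun ω => ω ∈ E)).card : ℝ) / (Fintype.card Ω : ℝ)

/-- Distance from `u` to the nearest node that cached file `j` (the distance travelled
by a request served by Strategy I; every nearest-replica tie-breaking gives this same
distance). -/
noncomputable def nearestDist {m M K : ℕ} (ω : Placement m M K) (u : Node m)
    (j : Fin K) : ℕ :=
  sInf {d | ∃ v, cached ω v j ∧ torusDist u v = d}

/-- Communication cost of Strategy I under the Uniform popularity distribution:
the expectation — over the uniform random placement, the uniform random origin and the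
uniform random requested file — of the graph distance between a request's origin and
the node serving it. -/
noncomputable def commCostI (m M K : ℕ) : ℝ :=
  (∑ ω : Placement m M K, ∑ u : Node m, ∑ j : Fin K, (nearestDist ω u j : ℝ)) /
    ((Fintype.card (Placement m M K) : ℝ) * ((m ^ 2 : ℕ) : ℝ) * (K : ℝ))

/-!
Fix an origin `u` and a file `j`. The nearest replica lies farther than `r` exactly when none
of the `M * |B_r|` cache slots of the ball `B_r` around `u` holds `j` while some slot of the
torus does, so `P(D > r) = (1 - 1/K)^(M |B_r|) - (1 - 1/K)^(M n)`, and `E D` is the sum of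
these tails. On the torus `(r + 1)² ≤ 4 |B_r|` and `|B_r| ≤ (2r + 1)²`. For the upper bound,
`(1 - 1/K)^(M |B_r|) ≤ exp (-M (r + 1)² / 4K)` and the Gaussian sum is `O(√(K/M))`. For the
lower bound, Bernoulli's inequality keeps the first `√(K/M)/4` tails above `3/4 - 1/2`, since
`K ≤ n` makes `(1 - 1/K)^(M n) ≤ 1/e`. Both bounds are uniform in `u` and `j`, hence survive
averaging over them.
-/

namespace CacheNetwork

open Finset

lemma add_sub_mod_of_lt {a b m : ℕ} (ha : a < m) (hb : b < m) :
    (a + m - b) % m = if b ≤ a then a - b else a + m - b := by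
  split_ifs with h
  · rw [show a + m - b = a - b + m by omega, Nat.add_mod_right, Nat.mod_eq_of_lt (by omega)]
  · exact Nat.mod_eq_of_lt (by omega)

section Torus

variable {m : ℕ}

lemma cdist_eq (a b : Fin m) :
    cdist a b = min (if b ≤ a then a.val - b else a + m - b)
      (if a ≤ b then b.val - a else b + m - a) := by
  rw [cdist, add_sub_mod_of_lt a.isLt b.isLt, add_sub_mod_of_lt b.isLt a.isLt]
  rfl

lemma two_mul_cdist_le (a b : Fin m) : 2 * cdist a b ≤ m := by
  rw [cdist_eq]; split_ifs <;> omega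

lemma torusDist_le (u v : Node m) : torusDist u v ≤ m := by
  have := two_mul_cdist_le u.1 v.1
  have := two_mul_cdist_le u.2 v.2
  unfold torusDist; omega

def coordBall (a : Fin m) (r : ℕ) : Finset (Fin m) := {b | cdist a b ≤ r}

def ball (u : Node m) (r : ℕ) : Finset (Node m) := {v | torusDist u v ≤ r}

lemma mem_coordBall {a b : Fin m} {r : ℕ} : b ∈ coordBall a r ↔ cdist a b ≤ r := by
  simp [coordBall]

lemma mem_ball {u v : Node m} {r : ℕ} : v ∈ ball u r ↔ torusDist u v ≤ r := by
  simp [ball]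

/-- `b` is determined by its offset `(b + m - a) % m` from `a`, which is at most `r` or at
least `m - r` when `b` lies in the ball. -/
lemma card_coordBall_le (a : Fin m) (r : ℕ) : #(coordBall a r) ≤ 2 * r + 1 := by
  calc #(coordBall a r) ≤ #(range (r + 1) ∪ Ico (m - r) m) := by
        refine card_le_card_of_injOn (fun b => (b.val + m - a) % m) (fun b hb => ?_)
          (fun b₁ _ b₂ _ h => ?_)
        · have := mem_coordBall.mp hb
          simp only [coe_union, coe_range, coe_Ico, Set.mem_union, Set.mem_Iio, Set.mem_Ico]
          rw [cdist_eq] at this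
          rw [add_sub_mod_of_lt b.isLt a.isLt]
          split_ifs at this ⊢ <;> omega
        · simp only [add_sub_mod_of_lt b₁.isLt a.isLt, add_sub_mod_of_lt b₂.isLt a.isLt] at h
          ext
          split_ifs at h <;> omega
    _ ≤ (r + 1) + r := by
        refine (card_union_le _ _).trans (add_le_add (card_range _).le ?_)
        rw [Nat.card_Ico]; omega
    _ = 2 * r + 1 := by ring

lemma le_card_coordBall (a : Fin m) {s : ℕ} (hs : s < m) : s + 1 ≤ #(coordBall a s) := by
  refine le_card_of_inj_on_range (fun i => ⟨(a + i) % m, Nat.mod_lt _ a.pos⟩) (fun i hi => ?_)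
    (fun i hi i' hi' h => ?_)
  · rw [mem_coordBall, cdist_eq]
    have := a.isLt
    rcases Nat.lt_or_ge (a + i) m with h | h
    · simp only [Nat.mod_eq_of_lt h]
      split_ifs <;> omega
    · simp only [Nat.mod_eq_sub_mod h, Nat.mod_eq_of_lt (show a + i - m < m by omega)]
      split_ifs <;> omega
  · exact (Nat.ModEq.add_left_cancel' a (Fin.mk.inj_iff.mp h)).eq_of_lt_of_lt (by omega) (by omega)

lemma ball_subset_coordBall_prod (u : Node m) (r : ℕ) :
    ball u r ⊆ coordBall u.1 r ×ˢ coordBall u.2 r := by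
  intro v hv
  have := mem_ball.mp hv
  rw [mem_product, mem_coordBall, mem_coordBall]
  unfold torusDist at this
  omega

lemma coordBall_prod_subset_ball (u : Node m) (s : ℕ) :
    coordBall u.1 s ×ˢ coordBall u.2 s ⊆ ball u (2 * s) := by
  intro v hv
  rw [mem_product, mem_coordBall, mem_coordBall] at hv
  rw [mem_ball, torusDist]
  omega

lemma ball_mono (u : Node m) {r r' : ℕ} (h : r ≤ r') : ball u r ⊆ ball u r' :=
  fun _ hv => mem_ball.mpr ((mem_ball.mp hv).trans h)

lemma card_ball_le (u : Node m) (r : ℕ) : #(ball u r) ≤ (2 * r + 1) ^ 2 :=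
  calc #(ball u r) ≤ #(coordBall u.1 r) * #(coordBall u.2 r) :=
        (card_le_card (ball_subset_coordBall_prod u r)).trans (card_product _ _).le
    _ ≤ (2 * r + 1) ^ 2 := by
        rw [sq]; exact Nat.mul_le_mul (card_coordBall_le _ _) (card_coordBall_le _ _)

lemma sq_succ_le_four_mul_card_ball (u : Node m) {r : ℕ} (hr : r < 2 * m) :
    (r + 1) ^ 2 ≤ 4 * #(ball u r) := by
  have hs : r / 2 + 1 ≤ #(coordBall u.1 (r / 2)) ∧ r / 2 + 1 ≤ #(coordBall u.2 (r / 2)) :=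
    ⟨le_card_coordBall _ (by omega), le_card_coordBall _ (by omega)⟩
  have hball : #(coordBall u.1 (r / 2)) * #(coordBall u.2 (r / 2)) ≤ #(ball u r) := by
    rw [← card_product]
    exact card_le_card ((coordBall_prod_subset_ball u _).trans (ball_mono u (by omega)))
  calc (r + 1) ^ 2 ≤ (2 * (r / 2 + 1)) ^ 2 := Nat.pow_le_pow_left (by omega) 2
    _ = 4 * ((r / 2 + 1) * (r / 2 + 1)) := by ring
    _ ≤ 4 * #(ball u r) := Nat.mul_le_mul_left 4 ((Nat.mul_le_mul hs.1 hs.2).trans hball)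

end Torus

section UniformProbability

variable {Ω : Type*} [Fintype Ω]

-- Frees `unifProb` from the classical decidability instance it is defined with.
lemma unifProb_eq_card_div (E : Set Ω) [DecidablePred (· ∈ E)] :
    unifProb E = #(univ.filter (· ∈ E)) / Fintype.card Ω := by
  rw [unifProb]
  congr

lemma unifProb_diff {A B : Set Ω} (h : B ⊆ A) : unifProb (A \ B) = unifProb A - unifProb B := by
  have hfilter : univ.filter (· ∈ A \ B) = univ.filter (· ∈ A) \ univ.filter (· ∈ B) := by
    ext; simp
  have hsub : univ.filter (· ∈ B) ⊆ univ.filter (· ∈ A) := monotone_filter_right _ fun _ _ => @h _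
  rw [unifProb_eq_card_div, unifProb_eq_card_div, unifProb_eq_card_div, hfilter,
    card_sdiff_of_subset hsub, Nat.cast_sub (card_le_card hsub), sub_div]

lemma unifProb_ne (a : Ω) : unifProb {ω | ω ≠ a} = 1 - 1 / Fintype.card Ω := by
  have hfilter : univ.filter (· ∈ {ω | ω ≠ a}) = univ.erase a := by
    ext; simp
  have hpos : 0 < Fintype.card Ω := Fintype.card_pos_iff.mpr ⟨a⟩
  rw [unifProb_eq_card_div, hfilter, card_erase_of_mem (mem_univ a), card_univ,
    Nat.cast_sub hpos, Nat.cast_one, sub_div, div_self (by positivity)]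

lemma expect_eq_sum_unifProb_lt (X : Ω → ℕ) {N : ℕ} (hX : ∀ ω, X ω ≤ N) :
    𝔼 ω, (X ω : ℝ) = ∑ r ∈ range N, unifProb {ω | r < X ω} := by
  have htail : ∀ ω, (X ω : ℝ) = ∑ r ∈ range N, if r < X ω then 1 else 0 := fun ω => by
    rw [sum_boole, range_eq_Ico, Ico_filter_lt, min_eq_right (hX ω)]
    simp
  simp_rw [Fintype.expect_eq_sum_div_card, htail, unifProb_eq_card_div]
  rw [sum_comm, sum_div]
  simp_rw [sum_boole]
  rfl

lemma unifProb_forall_mem_pi {ι α : Type*} [Fintype ι] [DecidableEq ι] [Fintype α] [Nonempty α]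
    (S : Finset ι) (T : Set α) :
    unifProb {f : ι → α | ∀ i ∈ S, f i ∈ T} = unifProb T ^ #S := by
  have hfilter : univ.filter (· ∈ {f : ι → α | ∀ i ∈ S, f i ∈ T}) =
      Fintype.piFinset fun i => if i ∈ S then univ.filter (· ∈ T) else univ := by
    ext f
    simp only [Set.mem_ofPred_eq, mem_filter, mem_univ, true_and, Fintype.mem_piFinset]
    refine ⟨fun hf i => ?_, fun hf i hi => ?_⟩
    · split_ifs with hi
      · simpa using hf i hi
      · exact mem_univ _
    · simpa [hi] using hf i
  have hpos : (Fintype.card α : ℝ) ≠ 0 := by positivity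
  have hden : (Fintype.card α : ℝ) ^ Fintype.card ι = ∏ _i : ι, (Fintype.card α : ℝ) := by simp
  rw [unifProb_eq_card_div, hfilter, Fintype.card_piFinset, Fintype.card_fun, Nat.cast_prod,
    Nat.cast_pow, hden, ← prod_div_distrib, unifProb_eq_card_div, ← prod_const, ← univ_inter S,
    ← prod_ite_mem]
  refine prod_congr rfl fun i _ => ?_
  by_cases hi : i ∈ S <;> simp [hi, hpos]

end UniformProbability

lemma _root_.Nat.lt_sInf_iff {s : Set ℕ} {r : ℕ} : r < sInf s ↔ s.Nonempty ∧ ∀ d ∈ s, r < d :=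
  ⟨fun h => ⟨Nat.nonempty_of_pos_sInf (r.zero_le.trans_lt h),
      fun _ hd => h.trans_le (Nat.sInf_le hd)⟩,
    fun ⟨hne, h⟩ => h _ (Nat.sInf_mem hne)⟩

section NearestReplica

variable {m M K : ℕ}

-- `sInf ∅ = 0`: when no node caches `j`, the distance is `0`.
lemma lt_nearestDist_iff {ω : Placement m M K} {u : Node m} {j : Fin K} {r : ℕ} :
    r < nearestDist ω u j ↔ (∃ v, cached ω v j) ∧ ∀ v ∈ ball u r, ¬cached ω v j := by
  rw [nearestDist, Nat.lt_sInf_iff]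
  refine and_congr ⟨fun ⟨_, v, hv, _⟩ => ⟨v, hv⟩, fun ⟨v, hv⟩ => ⟨_, v, hv, rfl⟩⟩
    ⟨fun h v hv hc => (h _ ⟨v, hc, rfl⟩).not_ge (mem_ball.mp hv), fun h d ⟨v, hc, hd⟩ => ?_⟩
  exact hd ▸ lt_of_not_ge fun hle => h v (mem_ball.mpr hle) hc

lemma nearestDist_le (ω : Placement m M K) (u : Node m) (j : Fin K) : nearestDist ω u j ≤ m := by
  by_contra! h
  obtain ⟨⟨v, hv⟩, hfar⟩ := lt_nearestDist_iff.mp h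
  exact hfar v (mem_ball.mpr (torusDist_le u v)) hv

lemma unifProb_forall_not_cached (S : Finset (Node m)) (j : Fin K) :
    unifProb {ω : Placement m M K | ∀ v ∈ S, ¬cached ω v j} = (1 - 1 / K : ℝ) ^ (M * #S) := by
  have hset : {ω : Placement m M K | ∀ v ∈ S, ¬cached ω v j} =
      {ω | ∀ v ∈ S, ω v ∈ {f : Fin M → Fin K | ∀ i ∈ univ, f i ∈ {k | k ≠ j}}} := by
    ext; simp [cached]
  have : Nonempty (Fin K) := ⟨j⟩
  rw [hset, unifProb_forall_mem_pi, unifProb_forall_mem_pi, unifProb_ne, Fintype.card_fin,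
    card_univ, Fintype.card_fin, pow_mul]

lemma unifProb_lt_nearestDist (u : Node m) (j : Fin K) (r : ℕ) :
    unifProb {ω : Placement m M K | r < nearestDist ω u j} =
      (1 - 1 / K : ℝ) ^ (M * #(ball u r)) - (1 - 1 / K : ℝ) ^ (M * (m * m)) := by
  have hset : {ω : Placement m M K | r < nearestDist ω u j} =
      {ω | ∀ v ∈ ball u r, ¬cached ω v j} \ {ω | ∀ v ∈ univ, ¬cached ω v j} := by
    ext; simp [lt_nearestDist_iff, and_comm]
  rw [hset, unifProb_diff, unifProb_forall_not_cached, unifProb_forall_not_cached, card_univ,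
    Fintype.card_prod, Fintype.card_fin]
  exact fun ω hω v _ => hω v (mem_univ v)

lemma expect_nearestDist_eq (u : Node m) (j : Fin K) :
    𝔼 ω : Placement m M K, (nearestDist ω u j : ℝ) =
      ∑ r ∈ range m, ((1 - 1 / K : ℝ) ^ (M * #(ball u r)) - (1 - 1 / K : ℝ) ^ (M * (m * m))) := by
  rw [expect_eq_sum_unifProb_lt _ fun ω => nearestDist_le ω u j]
  exact sum_congr rfl fun r _ => unifProb_lt_nearestDist u j r

end NearestReplica

section Estimates

open Real

lemma one_sub_inv_nonneg (K : ℕ) : (0 : ℝ) ≤ 1 - 1 / K := by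
  simpa using Nat.cast_inv_le_one K

lemma one_sub_inv_pow_le_exp (K n : ℕ) : (1 - 1 / K : ℝ) ^ n ≤ exp (-(n / K)) :=
  calc (1 - 1 / K : ℝ) ^ n ≤ exp (-(1 / K)) ^ n :=
        pow_le_pow_left₀ (one_sub_inv_nonneg K) (one_sub_le_exp_neg _) n
    _ = exp (-(n / K)) := by rw [← exp_nat_mul]; ring_nf

lemma one_sub_div_le_one_sub_inv_pow (K n : ℕ) : 1 - n / K ≤ (1 - 1 / K : ℝ) ^ n := by
  have := one_add_mul_le_pow (a := -(1 / K : ℝ)) (by linarith [one_sub_inv_nonneg K]) n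
  calc 1 - n / K = 1 + n * -(1 / K : ℝ) := by ring
    _ ≤ (1 - 1 / K : ℝ) ^ n := by simpa [sub_eq_add_neg] using this

lemma sum_range_exp_neg_sq_le {y : ℝ} (hy : 0 < y) (N : ℕ) :
    ∑ k ∈ range N, exp (-(y * (k + 1)) ^ 2) ≤ exp 1 / (2 * y) := by
  set ρ := exp (-(2 * y))
  have hρ : ρ < 1 := exp_lt_one_iff.mpr (by linarith)
  -- `t ^ 2 ≥ 2 t - 1` turns the Gaussian tail into a geometric one.
  have hterm : ∀ k : ℕ, exp (-(y * (k + 1)) ^ 2) ≤ exp 1 * ρ ^ (k + 1) := fun k => by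
    rw [← exp_nat_mul, ← exp_add]
    gcongr
    push_cast
    nlinarith [sq_nonneg (y * (k + 1) - 1)]
  have hgeom : ∑ k ∈ range N, ρ ^ (k + 1) ≤ ρ / (1 - ρ) := by
    have := geom_sum_Ico_le_of_lt_one (exp_pos _).le hρ (m := 1) (n := N + 1)
    simpa only [sum_Ico_eq_sum_range, Nat.add_sub_cancel, pow_one, add_comm 1] using this
  have hratio : ρ / (1 - ρ) ≤ 1 / (2 * y) := by
    rw [div_le_div_iff₀ (by linarith) (by linarith)]
    have := add_one_le_exp (2 * y)
    have : ρ * exp (2 * y) = 1 := by rw [← exp_add]; simp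
    nlinarith [exp_pos (-(2 * y))]
  calc ∑ k ∈ range N, exp (-(y * (k + 1)) ^ 2) ≤ ∑ k ∈ range N, exp 1 * ρ ^ (k + 1) :=
        sum_le_sum fun k _ => hterm k
    _ ≤ exp 1 * (1 / (2 * y)) := by
        rw [← mul_sum]; gcongr; exact hgeom.trans hratio
    _ = exp 1 / (2 * y) := by ring

variable {m M K : ℕ}

lemma expect_nearestDist_le (u : Node m) (j : Fin K) (hM : 0 < M) :
    𝔼 ω : Placement m M K, (nearestDist ω u j : ℝ) ≤ 3 * √(K / M) := by
  have hK : (0 : ℝ) < K := by exact_mod_cast j.pos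
  set y := √(K / M)
  have hy : 0 < y := sqrt_pos.mpr (by positivity)
  have hyy : y ^ 2 = K / M := sq_sqrt (by positivity)
  have hterm : ∀ r ∈ range m, (1 - 1 / K : ℝ) ^ (M * #(ball u r)) -
      (1 - 1 / K : ℝ) ^ (M * (m * m)) ≤ exp (-(1 / (2 * y) * (r + 1)) ^ 2) := fun r hr => by
    have hball : ((r + 1) ^ 2 : ℝ) ≤ 4 * #(ball u r) := by
      exact_mod_cast sq_succ_le_four_mul_card_ball u (by simp at hr; omega)
    calc _ ≤ (1 - 1 / K : ℝ) ^ (M * #(ball u r)) :=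
          sub_le_self _ (pow_nonneg (one_sub_inv_nonneg K) _)
      _ ≤ exp (-((M * #(ball u r) : ℕ) / K)) := one_sub_inv_pow_le_exp _ _
      _ ≤ exp (-(1 / (2 * y) * (r + 1)) ^ 2) := by
          gcongr
          rw [mul_pow, div_pow, mul_pow, hyy]
          push_cast
          field_simp
          nlinarith
  rw [expect_nearestDist_eq]
  calc _ ≤ ∑ r ∈ range m, exp (-(1 / (2 * y) * (r + 1)) ^ 2) := sum_le_sum hterm
    _ ≤ exp 1 / (2 * (1 / (2 * y))) := sum_range_exp_neg_sq_le (by positivity) m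
    _ = exp 1 * y := by field_simp
    _ ≤ 3 * y := by gcongr; linarith [exp_one_lt_d9]

lemma one_sub_inv_pow_le_half {n : ℕ} (hK : 0 < K) (hKn : K ≤ n) :
    (1 - 1 / K : ℝ) ^ n ≤ 1 / 2 :=
  calc (1 - 1 / K : ℝ) ^ n ≤ exp (-(n / K)) := one_sub_inv_pow_le_exp K n
    _ ≤ exp (-1) := by
        gcongr
        rw [le_div_iff₀ (by exact_mod_cast hK)]
        exact_mod_cast (by simpa using hKn)
    _ ≤ 1 / 2 := by
        rw [exp_neg, one_div]
        exact inv_anti₀ two_pos (by linarith [add_one_le_exp 1])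

lemma le_expect_nearestDist (u : Node m) (j : Fin K) (hM : 0 < M) (hMK : 64 * M ≤ K)
    (hKm : K ≤ m * m) :
    1 / 32 * √(K / M) ≤ 𝔼 ω : Placement m M K, (nearestDist ω u j : ℝ) := by
  have hM' : (1 : ℝ) ≤ M := by exact_mod_cast hM
  have hK : (0 : ℝ) < K := by exact_mod_cast j.pos
  set y := √(K / M)
  have hyy : y ^ 2 = K / M := sq_sqrt (by positivity)
  have hy : 8 ≤ y := le_sqrt_of_sq_le (by rw [le_div_iff₀ (by positivity)]; exact_mod_cast hMK)
  have hym : y ≤ m := sqrt_le_iff.mpr ⟨by positivity, by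
    have : (K : ℝ) ≤ m * m := by exact_mod_cast hKm
    rw [div_le_iff₀ (by positivity)]; nlinarith⟩
  set R := ⌊y / 4⌋₊
  have hR : y / 4 - 1 < R := Nat.sub_one_lt_floor _
  have hRy : (R : ℝ) ≤ y / 4 := Nat.floor_le (by positivity)
  have hRm : R ≤ m := by exact_mod_cast (show (R : ℝ) ≤ m by linarith)
  have hfar : (1 - 1 / K : ℝ) ^ (M * (m * m)) ≤ 1 / 2 :=
    one_sub_inv_pow_le_half j.pos (hKm.trans (Nat.le_mul_of_pos_left _ hM))
  have hnear : ∀ r < R, 3 / 4 ≤ (1 - 1 / K : ℝ) ^ (M * #(ball u r)) := fun r hr => by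
    refine le_trans ?_ (one_sub_div_le_one_sub_inv_pow K _)
    have hball : (#(ball u r) : ℝ) ≤ 4 * R ^ 2 := by
      have : (2 * r + 1) ^ 2 ≤ 4 * R ^ 2 := by nlinarith
      exact_mod_cast (card_ball_le u r).trans this
    have : (R : ℝ) ^ 2 * M ≤ K / 16 :=
      calc (R : ℝ) ^ 2 * M ≤ (y / 4) ^ 2 * M := by gcongr
        _ = (K : ℝ) / 16 := by rw [div_pow, hyy]; field_simp; ring
    rw [le_sub_comm, div_le_iff₀ hK]
    push_cast
    nlinarith
  have hterm_nonneg : ∀ r, 0 ≤ (1 - 1 / K : ℝ) ^ (M * #(ball u r)) -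
      (1 - 1 / K : ℝ) ^ (M * (m * m)) := fun r => by
    have hb : #(ball u r) ≤ m * m := by simpa using card_le_univ (ball u r)
    exact sub_nonneg.mpr (pow_le_pow_of_le_one (one_sub_inv_nonneg K) (by simp)
      (Nat.mul_le_mul_left M hb))
  rw [expect_nearestDist_eq]
  calc 1 / 32 * y ≤ R * (1 / 4) := by linarith
    _ = ∑ r ∈ range R, (1 / 4 : ℝ) := by simp
    _ ≤ ∑ r ∈ range R, ((1 - 1 / K : ℝ) ^ (M * #(ball u r)) - (1 - 1 / K : ℝ) ^ (M * (m * m))) :=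
        sum_le_sum fun r hr => by linarith [hnear r (mem_range.mp hr)]
    _ ≤ _ := sum_le_sum_of_subset_of_nonneg (range_subset_range.mpr hRm) fun r _ _ => hterm_nonneg r

end Estimates

lemma commCostI_eq_expect (m M K : ℕ) :
    commCostI m M K =
      𝔼 u : Node m, 𝔼 j : Fin K, 𝔼 ω : Placement m M K, (nearestDist ω u j : ℝ) := by
  simp only [commCostI, Fintype.expect_eq_sum_div_card, ← sum_div, div_div, Fintype.card_prod,
    Fintype.card_fin]
  rw [sum_comm, sum_congr rfl fun u _ => sum_comm]
  push_cast
  ring_nf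

end CacheNetwork

open CacheNetwork Finset

theorem statement4_general (K M : ℕ → ℕ) (hM : ∀ n, 1 ≤ M n)
    (hKn : ∀ m : ℕ, K (m ^ 2) ≤ m ^ 2)
    (hlittle : (fun n => (M n : ℝ)) =o[atTop] fun n => (K n : ℝ)) :
    ∃ c₁ c₂ : ℝ, 0 < c₁ ∧ 0 < c₂ ∧ ∃ N : ℕ, ∀ m : ℕ, N ≤ m →
      c₁ * Real.sqrt ((K (m ^ 2) : ℝ) / (M (m ^ 2) : ℝ)) ≤
          commCostI m (M (m ^ 2)) (K (m ^ 2)) ∧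
      commCostI m (M (m ^ 2)) (K (m ^ 2)) ≤
          c₂ * Real.sqrt ((K (m ^ 2) : ℝ) / (M (m ^ 2) : ℝ)) := by
  obtain ⟨N, hN⟩ := eventually_atTop.mp (hlittle.def (by norm_num : (0 : ℝ) < 1 / 64))
  refine ⟨1 / 32, 3, by norm_num, by norm_num, max N 1, fun m hm => ?_⟩
  have hm0 : 0 < m := (le_max_right _ _).trans hm
  have hMK : 64 * M (m ^ 2) ≤ K (m ^ 2) := by
    have := hN (m ^ 2) (((le_max_left _ _).trans hm).trans (Nat.le_self_pow two_ne_zero m))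
    rw [Real.norm_natCast, Real.norm_natCast] at this
    exact_mod_cast (by linarith : (64 * M (m ^ 2) : ℝ) ≤ K (m ^ 2))
  have hKm : K (m ^ 2) ≤ m * m := sq m ▸ hKn m
  have hfile : (univ : Finset (Fin (K (m ^ 2)))).Nonempty :=
    ⟨⟨0, by linarith [hM (m ^ 2)]⟩, mem_univ _⟩
  have hnode : (univ : Finset (Node m)).Nonempty := ⟨(⟨0, hm0⟩, ⟨0, hm0⟩), mem_univ _⟩
  rw [commCostI_eq_expect]
  exact ⟨le_expect hnode fun u _ => le_expect hfile fun j _ =>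
      le_expect_nearestDist u j (hM _) hMK hKm,
    expect_le hnode fun u _ => expect_le hfile fun j _ => expect_nearestDist_le u j (hM _)⟩

/-- Under the Uniform popularity distribution and `M = o(K)` (in the
regimes of the model, where the library size is at most the number `n = m²` of nodes),
the communication cost of Strategy I is `Θ(√(K/M))` as `n → ∞`. -/
theorem statement4 (K M : ℕ → ℕ) (hM : ∀ n, 1 ≤ M n) (hMK : ∀ n, M n ≤ K n)
    (hKn : ∀ m : ℕ, K (m ^ 2) ≤ m ^ 2)
    (hlittle : (fun n => (M n : ℝ)) =o[atTop] fun n => (K n : ℝ)) :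
    ∃ c₁ c₂ : ℝ, 0 < c₁ ∧ 0 < c₂ ∧ ∃ N : ℕ, ∀ m : ℕ, N ≤ m →
      c₁ * Real.sqrt ((K (m ^ 2) : ℝ) / (M (m ^ 2) : ℝ)) ≤
          commCostI m (M (m ^ 2)) (K (m ^ 2)) ∧
      commCostI m (M (m ^ 2)) (K (m ^ 2)) ≤
          c₂ * Real.sqrt ((K (m ^ 2) : ℝ) / (M (m ^ 2) : ℝ)) :=
  statement4_general K M hM hKn hlittle
end

section
/- Let K = n and M = ⌈n^α⌉ for a constant 0 < α < 1/2, and suppose each node's cache is an independent uniformly random multiset of size M over the K files. Set δ = (1−α)/3 and let μ be any constant with μ ≥ 5/(1−2α). Then with probability at least 1 − O(1/n) the placement is (δ,μ)-good: every node u has t(u) ≥ δM distinct cached files, and every pair of distinct nodes u, v satisfies t(u,v) < μ. -/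
open scoped Classical BigOperators

/-- `t(u)`: the number of distinct files in the cache (a multiset of size `M` over the
`K` files) of node `u`. -/
noncomputable def tOne {n K M : ℕ} (ω : Fin n → Sym (Fin K) M) (u : Fin n) : ℕ :=
  (ω u).toMultiset.toFinset.card

/-- `t(u,v)`: the number of distinct files cached at both `u` and `v`. -/
noncomputable def tTwo {n K M : ℕ} (ω : Fin n → Sym (Fin K) M) (u v : Fin n) : ℕ :=
  ((ω u).toMultiset.toFinset ∩ (ω v).toMultiset.toFinset).card

/-- A placement is `(δ,μ)`-good if every node caches at least `δ·M` distinct files and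
every pair of distinct nodes shares fewer than `μ` distinct files. -/
def goodPlacement {n K M : ℕ} (δ : ℝ) (μ : ℕ) (ω : Fin n → Sym (Fin K) M) : Prop :=
  (∀ u, δ * (M : ℝ) ≤ (tOne ω u : ℝ)) ∧ ∀ u v, u ≠ v → tTwo ω u v < μ

open Finset

/-! Union bound over nodes and over pairs of nodes. A cache with at most `d = ⌊δM⌋` distinct
files lies in `S.sym M` for one of the `C(n,d)` sets `S` of size `d`, so this has probability at
most `n^d 4^M M^M / n^M ≤ n⁻²` since `3δ + α = 1`. Two caches both contain a given `μ`-set with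
probability at most `(M/n)^{2μ}`, and the `C(n,μ) ≤ n^μ` choices give at most `4^μ n⁻³` since
`(1 - 2α)μ ≥ 3`. The ratios of multichoose numbers come from iterating
`(k + 1) * multichoose n (k + 1) = (n + k) * multichoose n k`. -/

section UnifProb

variable {Ω : Type*} [Fintype Ω]

lemma unifProb_eq_card_toFinset_div (E : Set Ω) :
    unifProb E = #E.toFinset / Fintype.card Ω := by
  rw [unifProb, Set.filter_mem_univ_eq_toFinset]

lemma unifProb_setOf (p : Ω → Prop) [DecidablePred p] :
    unifProb {ω | p ω} = #{ω | p ω} / Fintype.card Ω := by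
  simp only [unifProb, Set.mem_ofPred_eq]

lemma unifProb_nonneg (E : Set Ω) : 0 ≤ unifProb E := by
  unfold unifProb
  positivity

lemma unifProb_mono {E F : Set Ω} (h : E ⊆ F) : unifProb E ≤ unifProb F := by
  simp only [unifProb_eq_card_toFinset_div]
  gcongr

lemma unifProb_union_le (E F : Set Ω) : unifProb (E ∪ F) ≤ unifProb E + unifProb F := by
  simp only [unifProb_eq_card_toFinset_div, ← add_div, Set.toFinset_union]
  gcongr
  exact_mod_cast card_union_le _ _

lemma unifProb_biUnion_le {ι : Type*} (s : Finset ι) (E : ι → Set Ω) :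
    unifProb (⋃ i ∈ s, E i) ≤ ∑ i ∈ s, unifProb (E i) := by
  induction s using Finset.induction_on with
  | empty => simp [unifProb]
  | insert i s _ ih =>
    rw [Finset.set_biUnion_insert, sum_insert ‹_›]
    exact (unifProb_union_le _ _).trans (by gcongr)

lemma unifProb_univ [Nonempty Ω] : unifProb (Set.univ : Set Ω) = 1 := by
  simp [unifProb_eq_card_toFinset_div]

lemma unifProb_eq_one_sub_unifProb_compl [Nonempty Ω] (E : Set Ω) :
    unifProb E = 1 - unifProb Eᶜ := by
  simp only [unifProb_eq_card_toFinset_div, Set.toFinset_compl, card_compl]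
  rw [Nat.cast_sub (card_le_univ _)]
  field_simp
  ring

end UnifProb

section Product

variable {ι β : Type*} [Fintype ι] [DecidableEq ι] [Fintype β]

lemma unifProb_pi (A : ι → Set β) :
    unifProb {ω : ι → β | ∀ i, ω i ∈ A i} = ∏ i, unifProb (A i) := by
  calc unifProb {ω : ι → β | ∀ i, ω i ∈ A i}
      = #(Fintype.piFinset fun i => (A i).toFinset) / (Fintype.card β ^ Fintype.card ι : ℝ) := by
        rw [unifProb_eq_card_toFinset_div, Fintype.card_fun, Nat.cast_pow]
        congr
        ext
        simp
    _ = ∏ i, unifProb (A i) := by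
        simp [Fintype.card_piFinset, Finset.prod_div_distrib, unifProb_eq_card_toFinset_div]

lemma unifProb_eval_mem (u : ι) (A : Set β) :
    unifProb {ω : ι → β | ω u ∈ A} = unifProb A := by
  rcases isEmpty_or_nonempty β with hβ | hβ
  · have : IsEmpty (ι → β) := ⟨fun ω => isEmptyElim (ω u)⟩
    simp [unifProb]
  have h := unifProb_pi (Function.update (fun _ => Set.univ) u A)
  rw [Fintype.prod_eq_single u fun i hi => by simp [hi, unifProb_univ]] at h
  convert h using 2
  · ext ω
    change _ ↔ ∀ i, ω i ∈ _
    rw [Function.forall_update_iff _ fun i (S : Set β) => ω i ∈ S]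
    simp
  · simp

lemma unifProb_eval_mem_and_eval_mem {u v : ι} (huv : u ≠ v) (A B : Set β) :
    unifProb {ω : ι → β | ω u ∈ A ∧ ω v ∈ B} = unifProb A * unifProb B := by
  rcases isEmpty_or_nonempty β with hβ | hβ
  · have : IsEmpty (ι → β) := ⟨fun ω => isEmptyElim (ω u)⟩
    simp [unifProb]
  have h := unifProb_pi (Function.update (Function.update (fun _ => Set.univ) u A) v B)
  rw [Fintype.prod_eq_mul u v huv fun i hi => by simp [hi.1, hi.2, unifProb_univ]] at h
  convert h using 2
  · ext ω
    change _ ↔ ∀ i, ω i ∈ _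
    refine ⟨fun ⟨hu, hv⟩ i => ?_, fun h => ⟨by simpa [huv] using h u, by simpa using h v⟩⟩
    by_cases hiv : i = v
    · subst hiv; simpa using hv
    · by_cases hiu : i = u
      · subst hiu; simpa [hiv] using hu
      · simp [hiu, hiv]
  · simp [huv]
  · simp

end Product

section Sym

variable {α : Type*} [DecidableEq α]

theorem Finset.card_sym (s : Finset α) (n : ℕ) : #(s.sym n) = (#s).multichoose n := by
  conv_lhs => rw [← s.attach_map_val]
  rw [sym_map, card_map, ← univ_eq_attach, sym_univ, card_univ, Sym.card_sym_eq_multichoose,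
    Fintype.card_coe]

variable [Fintype α]

lemma card_filter_subset_toFinset_le (T : Finset α) {M : ℕ} (hT : #T ≤ M) :
    #{s : Sym α M | T ⊆ s.toMultiset.toFinset} ≤ (Fintype.card α).multichoose (M - #T) := by
  let addT : Sym α (M - #T) → Sym α M := fun t => ⟨t.toMultiset + T.val, by
    rw [Multiset.card_add, Sym.card_coe, ← card_def, Nat.sub_add_cancel hT]⟩
  calc #{s : Sym α M | T ⊆ s.toMultiset.toFinset}
      ≤ #(univ.image addT) := by
        refine card_le_card fun s hs => mem_image.2 ?_
        have hTs : T.val ≤ s.toMultiset :=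
          (Multiset.le_iff_subset T.nodup).2 fun x hx => by simpa using (mem_filter.1 hs).2 hx
        refine ⟨⟨s.toMultiset - T.val, ?_⟩, mem_univ _, Sym.coe_injective ?_⟩
        · rw [Multiset.card_sub hTs, Sym.card_coe, ← card_def]
        · exact tsub_add_cancel_of_le hTs
    _ ≤ (Fintype.card α).multichoose (M - #T) := by
        rw [← Sym.card_sym_eq_multichoose, ← card_univ]
        exact card_image_le

lemma unifProb_card_toFinset_le {d : ℕ} (M : ℕ) (hd : d ≤ Fintype.card α) :
    unifProb {s : Sym α M | #s.toMultiset.toFinset ≤ d} ≤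
      (Fintype.card α).choose d * d.multichoose M / (Fintype.card α).multichoose M := by
  have hcover : ({s : Sym α M | #s.toMultiset.toFinset ≤ d} : Finset _) ⊆
      (powersetCard d univ).biUnion fun S => S.sym M := by
    intro s hs
    obtain ⟨S, hsS, -, hS⟩ := exists_subsuperset_card_eq (subset_univ _) (mem_filter.1 hs).2
      (by simpa using hd)
    exact mem_biUnion.2 ⟨S, mem_powersetCard.2 ⟨subset_univ _, hS⟩,
      mem_sym_iff.2 fun a ha => hsS (Multiset.mem_toFinset.2 ha)⟩
  have hcard : #{s : Sym α M | #s.toMultiset.toFinset ≤ d} ≤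
      (Fintype.card α).choose d * d.multichoose M :=
    calc _ ≤ _ := card_le_card hcover
      _ ≤ ∑ S ∈ powersetCard d (univ : Finset α), #(S.sym M) := card_biUnion_le
      _ = _ := by
        rw [sum_congr rfl fun S hS => by rw [card_sym, (mem_powersetCard.1 hS).2], sum_const,
          card_powersetCard, card_univ, smul_eq_mul]
  rw [unifProb_setOf, Sym.card_sym_eq_multichoose]
  gcongr
  exact_mod_cast hcard

lemma unifProb_subset_toFinset_le (T : Finset α) {M : ℕ} (hT : #T ≤ M) :
    unifProb {s : Sym α M | T ⊆ s.toMultiset.toFinset} ≤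
      (Fintype.card α).multichoose (M - #T) / (Fintype.card α).multichoose M := by
  rw [unifProb_setOf, Sym.card_sym_eq_multichoose]
  gcongr
  exact_mod_cast card_filter_subset_toFinset_le T hT

end Sym

section Placement

variable {n K M : ℕ}

lemma unifProb_exists_tOne_le {d : ℕ} (hd : d ≤ K) :
    unifProb {ω : Fin n → Sym (Fin K) M | ∃ u, tOne ω u ≤ d} ≤
      n * (K.choose d * d.multichoose M / K.multichoose M) := by
  have hcover : {ω : Fin n → Sym (Fin K) M | ∃ u, tOne ω u ≤ d} ⊆
      ⋃ u ∈ univ, {ω | ω u ∈ {s : Sym (Fin K) M | #s.toMultiset.toFinset ≤ d}} := by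
    rintro ω ⟨u, hu⟩
    exact Set.mem_biUnion (mem_univ u) hu
  calc _ ≤ _ := unifProb_mono hcover
    _ ≤ ∑ u : Fin n, unifProb {ω : Fin n → Sym (Fin K) M |
          ω u ∈ {s : Sym (Fin K) M | #s.toMultiset.toFinset ≤ d}} := unifProb_biUnion_le _ _
    _ ≤ ∑ _u : Fin n, (K.choose d * d.multichoose M / K.multichoose M : ℝ) := by
        gcongr with u
        rw [unifProb_eval_mem]
        simpa using unifProb_card_toFinset_le (α := Fin K) M (by simpa using hd)
    _ = _ := by simp

lemma unifProb_exists_le_tTwo {μ : ℕ} (hμ : μ ≤ M) :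
    unifProb {ω : Fin n → Sym (Fin K) M | ∃ u v, u ≠ v ∧ μ ≤ tTwo ω u v} ≤
      n ^ 2 * (K.choose μ * (K.multichoose (M - μ) / K.multichoose M) ^ 2) := by
  set B : Finset (Fin K) → Set (Sym (Fin K) M) := fun T => {s | T ⊆ s.toMultiset.toFinset}
  set p : ℝ := K.multichoose (M - μ) / K.multichoose M
  have hB : ∀ T ∈ powersetCard μ (univ : Finset (Fin K)), unifProb (B T) ≤ p := fun T hT => by
    simpa [(mem_powersetCard.1 hT).2] using
      unifProb_subset_toFinset_le T (by rwa [(mem_powersetCard.1 hT).2])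
  have hcover : {ω : Fin n → Sym (Fin K) M | ∃ u v, u ≠ v ∧ μ ≤ tTwo ω u v} ⊆
      ⋃ u ∈ univ, ⋃ v ∈ univ.erase u, ⋃ T ∈ powersetCard μ univ,
        {ω | ω u ∈ B T ∧ ω v ∈ B T} := by
    rintro ω ⟨u, v, huv, hμuv⟩
    obtain ⟨T, hT, hTμ⟩ := exists_subset_card_eq hμuv
    simp only [Set.mem_iUnion]
    exact ⟨u, mem_univ _, v, mem_erase.2 ⟨huv.symm, mem_univ _⟩, T,
      mem_powersetCard.2 ⟨subset_univ _, hTμ⟩, hT.trans inter_subset_left,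
      hT.trans inter_subset_right⟩
  calc _ ≤ _ := unifProb_mono hcover
    _ ≤ ∑ u : Fin n, ∑ v ∈ univ.erase u, ∑ T ∈ powersetCard μ univ,
          unifProb {ω : Fin n → Sym (Fin K) M | ω u ∈ B T ∧ ω v ∈ B T} := by
        refine (unifProb_biUnion_le _ _).trans (sum_le_sum fun u _ => ?_)
        refine (unifProb_biUnion_le _ _).trans (sum_le_sum fun v _ => ?_)
        exact unifProb_biUnion_le _ _
    _ ≤ ∑ _u : Fin n, ∑ _v : Fin n, K.choose μ * p ^ 2 := by
        refine sum_le_sum fun u _ => ?_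
        calc _ ≤ ∑ _v ∈ univ.erase u, (K.choose μ * p ^ 2 : ℝ) := sum_le_sum fun v hv => ?_
          _ ≤ _ := sum_le_sum_of_subset_of_nonneg (erase_subset u univ) fun _ _ _ => by positivity
        calc _ = ∑ T ∈ powersetCard μ univ, unifProb (B T) ^ 2 := sum_congr rfl fun T _ => by
              rw [unifProb_eval_mem_and_eval_mem (ne_of_mem_erase hv).symm, sq]
          _ ≤ ∑ _T ∈ powersetCard μ (univ : Finset (Fin K)), p ^ 2 :=
              sum_le_sum fun T hT => pow_le_pow_left₀ (unifProb_nonneg _) (hB T hT) 2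
          _ = _ := by simp
    _ = _ := by simp [sq, mul_assoc]

theorem Nat.succ_mul_multichoose_succ (n k : ℕ) :
    (k + 1) * n.multichoose (k + 1) = (n + k) * n.multichoose k := by
  cases n with
  | zero => cases k <;> simp
  | succ n =>
    rw [Nat.multichoose_eq, Nat.multichoose_eq, show n + 1 + (k + 1) - 1 = n + k + 1 by omega,
      show n + 1 + k - 1 = n + k by omega, show n + 1 + k = n + k + 1 by omega,
      Nat.add_one_mul_choose_eq, mul_comm]

theorem Nat.pow_mul_multichoose_le (n j k : ℕ) :
    n ^ j * n.multichoose k ≤ (k + j) ^ j * n.multichoose (k + j) := by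
  induction j with
  | zero => simp
  | succ j ih =>
    calc n ^ (j + 1) * n.multichoose k = n * (n ^ j * n.multichoose k) := by ring
      _ ≤ (n + (k + j)) * ((k + j) ^ j * n.multichoose (k + j)) :=
        Nat.mul_le_mul (by omega) ih
      _ = (k + j) ^ j * ((k + j + 1) * n.multichoose (k + j + 1)) := by
        rw [Nat.succ_mul_multichoose_succ]; ring
      _ ≤ (k + j + 1) ^ j * ((k + j + 1) * n.multichoose (k + j + 1)) :=
        Nat.mul_le_mul_right _ (Nat.pow_le_pow_left (by omega) j)
      _ = (k + (j + 1)) ^ (j + 1) * n.multichoose (k + (j + 1)) := by rw [← add_assoc]; ring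

section Estimates

variable {n M : ℕ}

lemma choose_mul_multichoose_div_multichoose_le {d : ℕ} {α δ : ℝ} (hdM : d ≤ M)
    (hn : 8 ≤ (n : ℝ) ^ δ) (hM : (M : ℝ) ≤ 2 * n ^ α) (hexp : d + 2 + (δ + α) * M ≤ M) :
    (n.choose d * d.multichoose M / n.multichoose M : ℝ) ≤ 1 / n ^ 2 := by
  have hn1 : 1 ≤ n := Nat.one_le_iff_ne_zero.2 <| by
    rintro rfl
    rw [Nat.cast_zero] at hn
    linarith [Real.zero_rpow_le_one δ]
  have hx : (1 : ℝ) ≤ n := by exact_mod_cast hn1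
  have hx0 : (0 : ℝ) < n := by linarith
  have hNc : (n : ℝ) ^ M ≤ M ^ M * n.multichoose M := by
    have := Nat.pow_mul_multichoose_le n M 0
    rw [Nat.multichoose_zero_right, zero_add, mul_one] at this
    exact_mod_cast this
  have hC : (n.choose d * d.multichoose M : ℝ) ≤ n ^ d * 4 ^ M := by
    have : d.multichoose M ≤ 4 ^ M :=
      calc d.multichoose M ≤ 2 ^ (d + M - 1) := by
            rw [Nat.multichoose_eq]; exact Nat.choose_le_two_pow _ _
        _ ≤ 2 ^ (2 * M) := Nat.pow_le_pow_right (by norm_num) (by omega)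
        _ = 4 ^ M := by rw [pow_mul]; norm_num
    exact_mod_cast Nat.mul_le_mul (Nat.choose_le_pow n d) this
  have h4M : 4 * (M : ℝ) ≤ (n : ℝ) ^ (δ + α) := by
    rw [Real.rpow_add hx0]
    nlinarith [Real.rpow_nonneg hx0.le α]
  have hmc : (0 : ℝ) < n.multichoose M := by
    exact_mod_cast (Nat.multichoose_eq n M ▸ Nat.choose_pos (by omega))
  have hM0 : 0 < M := Nat.pos_of_ne_zero <| by rintro rfl; simp at hexp; linarith
  have hMM : (0 : ℝ) < M ^ M := by positivity
  rw [div_le_div_iff₀ hmc (by positivity), ← mul_le_mul_iff_of_pos_right hMM]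
  calc (n.choose d * d.multichoose M : ℝ) * n ^ 2 * M ^ M ≤ n ^ d * 4 ^ M * n ^ 2 * M ^ M := by
        gcongr
    _ = (n : ℝ) ^ ((d + 2 : ℕ) : ℝ) * (4 * M) ^ M := by rw [Real.rpow_natCast]; ring
    _ ≤ (n : ℝ) ^ ((d + 2 : ℕ) : ℝ) * (n : ℝ) ^ ((δ + α) * M) := by
        rw [Real.rpow_mul_natCast hx0.le]
        gcongr
    _ ≤ (n : ℝ) ^ (M : ℝ) := by
        rw [← Real.rpow_add hx0]
        exact Real.rpow_le_rpow_of_exponent_le hx (by push_cast; linarith)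
    _ ≤ M ^ M * n.multichoose M := by rwa [Real.rpow_natCast]
    _ = 1 * n.multichoose M * M ^ M := by ring

lemma choose_mul_multichoose_sub_div_sq_le {μ : ℕ} {α : ℝ} (hn : 1 ≤ n) (hμM : μ ≤ M)
    (hM : (M : ℝ) ≤ 2 * n ^ α) (hμ : 3 + 2 * α * μ ≤ μ) :
    (n.choose μ * (n.multichoose (M - μ) / n.multichoose M) ^ 2 : ℝ) ≤ 4 ^ μ / n ^ 3 := by
  have hx : (1 : ℝ) ≤ n := by exact_mod_cast hn
  have hx0 : (0 : ℝ) < n := by linarith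
  have hmc : (0 : ℝ) < n.multichoose M := by
    exact_mod_cast (Nat.multichoose_eq n M ▸ Nat.choose_pos (by omega))
  have hr : (n.multichoose (M - μ) / n.multichoose M : ℝ) ≤ (M / n) ^ μ := by
    have := Nat.pow_mul_multichoose_le n μ (M - μ)
    rw [Nat.sub_add_cancel hμM] at this
    have : (n : ℝ) ^ μ * n.multichoose (M - μ) ≤ M ^ μ * n.multichoose M := by exact_mod_cast this
    rw [div_pow, div_le_div_iff₀ hmc (by positivity)]
    linarith
  have hM2 : ((M : ℝ) ^ 2) ^ μ ≤ 4 ^ μ * (n : ℝ) ^ (2 * α * μ) := by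
    calc ((M : ℝ) ^ 2) ^ μ ≤ (4 * (n : ℝ) ^ (2 * α)) ^ μ := by
          gcongr
          rw [show 2 * α = α * (2 : ℕ) by push_cast; ring, Real.rpow_mul_natCast hx0.le]
          nlinarith [Real.rpow_nonneg hx0.le α]
      _ = 4 ^ μ * (n : ℝ) ^ (2 * α * μ) := by rw [mul_pow, Real.rpow_mul_natCast hx0.le]
  have hexp : (n : ℝ) ^ (2 * α * μ) * (n : ℝ) ^ 3 ≤ (n : ℝ) ^ μ := by
    rw [← Real.rpow_natCast _ 3, ← Real.rpow_natCast _ μ, ← Real.rpow_add hx0]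
    exact Real.rpow_le_rpow_of_exponent_le hx (by push_cast; linarith)
  calc (n.choose μ * (n.multichoose (M - μ) / n.multichoose M) ^ 2 : ℝ)
      ≤ (n : ℝ) ^ μ * ((M / n) ^ μ) ^ 2 := by
        gcongr
        exact_mod_cast Nat.choose_le_pow n μ
    _ = ((M : ℝ) ^ 2) ^ μ / (n : ℝ) ^ μ := by
        rw [div_pow, div_pow, ← pow_mul, ← pow_mul]
        field_simp
        ring
    _ ≤ 4 ^ μ * (n : ℝ) ^ (2 * α * μ) / (n : ℝ) ^ μ := by gcongr
    _ ≤ 4 ^ μ / (n : ℝ) ^ 3 := by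
        rw [div_le_div_iff₀ (by positivity) (by positivity)]
        nlinarith [pow_pos (by norm_num : (0 : ℝ) < 4) μ]

end Estimates

lemma unifProb_not_goodPlacement_le {n K M μ : ℕ} {δ : ℝ} (hdK : ⌊δ * M⌋₊ ≤ K) (hμM : μ ≤ M) :
    unifProb {ω : Fin n → Sym (Fin K) M | ¬ goodPlacement δ μ ω} ≤
      n * (K.choose ⌊δ * M⌋₊ * (⌊δ * M⌋₊).multichoose M / K.multichoose M) +
        n ^ 2 * (K.choose μ * (K.multichoose (M - μ) / K.multichoose M) ^ 2) := by
  have hcover : {ω : Fin n → Sym (Fin K) M | ¬ goodPlacement δ μ ω} ⊆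
      {ω | ∃ u, tOne ω u ≤ ⌊δ * M⌋₊} ∪ {ω | ∃ u v, u ≠ v ∧ μ ≤ tTwo ω u v} := by
    intro ω hω
    simp only [goodPlacement, not_and_or, not_forall, not_le, not_lt] at hω
    rcases hω with ⟨u, hu⟩ | ⟨u, v, huv, hμuv⟩
    · exact Or.inl ⟨u, Nat.le_floor hu.le⟩
    · exact Or.inr ⟨u, v, huv, hμuv⟩
  calc _ ≤ _ := unifProb_mono hcover
    _ ≤ _ := unifProb_union_le _ _
    _ ≤ _ := add_le_add (unifProb_exists_tOne_le hdK) (unifProb_exists_le_tTwo hμM)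

lemma unifProb_not_goodPlacement_le_div {n μ : ℕ} {α : ℝ} (hα0 : 0 ≤ α) (hα1 : α < 1) (hn : 1 ≤ n)
    (hμ : 3 + 2 * α * μ ≤ μ) (hnδ : 8 ≤ (n : ℝ) ^ ((1 - α) / 3)) (hnα : 6 / (1 - α) ≤ (n : ℝ) ^ α)
    (hnμ : μ ≤ (n : ℝ) ^ α) :
    unifProb {ω : Fin n → Sym (Fin n) ⌈(n : ℝ) ^ α⌉₊ | ¬ goodPlacement ((1 - α) / 3) μ ω} ≤
      (1 + 4 ^ μ) / n := by
  set M := ⌈(n : ℝ) ^ α⌉₊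
  set δ := (1 - α) / 3 with hδ
  set d := ⌊δ * M⌋₊
  have hδ1 : δ ≤ 1 / 3 := by linarith
  have hM : (n : ℝ) ^ α ≤ M := Nat.le_ceil _
  have hM2 : (M : ℝ) ≤ 2 * n ^ α := Nat.ceil_le_two_mul <| le_trans
    (by rw [le_div_iff₀ (by linarith)]; linarith) hnα
  have hμM : μ ≤ M := by exact_mod_cast hnμ.trans hM
  have hδM : 2 ≤ δ * M :=
    calc (2 : ℝ) = δ * (6 / (1 - α)) := by
          rw [hδ]; field_simp [(sub_pos.2 hα1).ne']; ring
      _ ≤ δ * M := by gcongr; exact hnα.trans hM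
  have hd : (d : ℝ) ≤ δ * M := Nat.floor_le (by linarith)
  have hdM : d ≤ M := by
    have : δ * M ≤ M := mul_le_of_le_one_left (Nat.cast_nonneg _) (by linarith)
    exact_mod_cast hd.trans this
  have hdn : d ≤ n := by
    have : δ * M ≤ n :=
      calc δ * M ≤ 1 / 3 * (2 * n ^ α) := by gcongr
        _ ≤ n := by
          linarith [Real.rpow_le_self_of_one_le (by exact_mod_cast hn : (1 : ℝ) ≤ n) hα1.le]
    exact_mod_cast hd.trans this
  have hexp : (d : ℝ) + 2 + (δ + α) * M ≤ M := by
    have : (δ + α) * M = M - 2 * (δ * M) := by ring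
    linarith
  calc _ ≤ _ := unifProb_not_goodPlacement_le hdn hμM
    _ ≤ n * (1 / n ^ 2) + n ^ 2 * (4 ^ μ / n ^ 3) := by
      refine add_le_add (mul_le_mul_of_nonneg_left ?_ (by positivity))
        (mul_le_mul_of_nonneg_left ?_ (by positivity))
      exacts [choose_mul_multichoose_div_multichoose_le hdM hnδ hM2 hexp,
        choose_mul_multichoose_sub_div_sq_le hn hμM hM2 hμ]
    _ = (1 + 4 ^ μ) / n := by field_simp

open Filter in
/-- Let `K = n` and `M = ⌈n^α⌉` for a constant `0 < α < 1/2`, and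
suppose each node's cache is an independent uniformly random multiset of size `M` over
the `K` files.  Set `δ = (1-α)/3` and let `μ` be a constant with `μ ≥ 5/(1-2α)`.  Then
with probability at least `1 - O(1/n)` the placement is `(δ,μ)`-good. -/
theorem statement7 (α : ℝ) (hα0 : 0 < α) (hα1 : α < 1 / 2) (μ : ℕ)
    (hμ : 5 / (1 - 2 * α) ≤ (μ : ℝ)) :
    ∃ C : ℝ, 0 < C ∧ ∃ N : ℕ, ∀ n : ℕ, N ≤ n →
      1 - C / (n : ℝ) ≤
        unifProb {ω : Fin n → Sym (Fin n) ⌈(n : ℝ) ^ α⌉₊ |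
          goodPlacement ((1 - α) / 3) μ ω} := by
  have hμ3 : 3 + 2 * α * μ ≤ μ := by
    rw [div_le_iff₀ (by linarith)] at hμ
    linarith
  have hpow : ∀ {r : ℝ}, 0 < r → Tendsto (fun n : ℕ => (n : ℝ) ^ r) atTop atTop :=
    fun hr => (tendsto_rpow_atTop hr).comp tendsto_natCast_atTop_atTop
  obtain ⟨N, hN⟩ := eventually_atTop.1 <| (eventually_ge_atTop 1).and <|
    ((hpow (by linarith : 0 < (1 - α) / 3)).eventually_ge_atTop 8).and <|
      ((hpow hα0).eventually_ge_atTop (6 / (1 - α))).and ((hpow hα0).eventually_ge_atTop μ)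
  refine ⟨1 + 4 ^ μ, by positivity, N, fun n hN_le => ?_⟩
  obtain ⟨hn, hnδ, hnα, hnμ⟩ := hN n hN_le
  have : Nonempty (Sym (Fin n) ⌈(n : ℝ) ^ α⌉₊) := ⟨Sym.replicate _ ⟨0, hn⟩⟩
  rw [unifProb_eq_one_sub_unifProb_compl, Set.compl_ofPred]
  linarith [unifProb_not_goodPlacement_le_div hα0.le (by linarith) hn hμ3 hnδ hnα hnμ]
end Placement
end

section
/- For natural numbers s, M, K with 1 ≤ s ≤ M ≤ K, the following inequality of real numbers holds: C(K,s)·C(M−1,M−s)/C(K+M−1,M) ≤ (2M)^M · K^{s−M}. -/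
lemma choose_le_two_pow' (n k : ℕ) : n.choose k ≤ 2 ^ n := by
  rcases le_or_gt k n with h | h
  · calc n.choose k ≤ ∑ m ∈ Finset.range (n + 1), n.choose m :=
        Finset.single_le_sum (fun i _ => Nat.zero_le _) (Finset.mem_range.2 (Nat.lt_succ_of_le h))
      _ = 2 ^ n := Nat.sum_range_choose n
  · simp [Nat.choose_eq_zero_of_lt h]

/-- For natural numbers `1 ≤ s ≤ M ≤ K`,
`C(K,s)·C(M-1,M-s)/C(K+M-1,M) ≤ (2M)^M · K^(s-M)` (the last power being an integer
power of a real number, `s - M ≤ 0`). -/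
theorem statement13 (s M K : ℕ) (h1 : 1 ≤ s) (h2 : s ≤ M) (h3 : M ≤ K) :
    (Nat.choose K s * Nat.choose (M - 1) (M - s) : ℝ) /
        (Nat.choose (K + M - 1) M : ℝ) ≤
      (2 * (M : ℝ)) ^ M * (K : ℝ) ^ ((s : ℤ) - (M : ℤ)) := by
  have hK1 : (1:ℕ) ≤ K := le_trans (le_trans h1 h2) h3
  have hKpos : (0:ℝ) < K := by exact_mod_cast hK1
  have hKne : (K:ℝ) ≠ 0 := ne_of_gt hKpos
  -- rewrite zpow
  have hz : (K : ℝ) ^ ((s : ℤ) - (M : ℤ)) = (K:ℝ) ^ s / (K:ℝ) ^ M := by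
    rw [zpow_sub₀ hKne, zpow_natCast, zpow_natCast]
  rw [hz, ← mul_div_assoc]
  have hCpos : (0:ℝ) < (Nat.choose (K + M - 1) M : ℝ) := by
    have : 0 < Nat.choose (K + M - 1) M :=
      Nat.choose_pos (by omega)
    exact_mod_cast this
  rw [div_le_div_iff₀ hCpos (pow_pos hKpos M)]
  -- key bounds
  have b1 : (Nat.choose K s : ℝ) ≤ (K:ℝ) ^ s := by
    exact_mod_cast Nat.choose_le_pow K s
  have b2 : (Nat.choose (M - 1) (M - s) : ℝ) ≤ 2 ^ M := by
    calc (Nat.choose (M - 1) (M - s) : ℝ) ≤ (2:ℝ) ^ (M - 1) := by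
          exact_mod_cast choose_le_two_pow' (M - 1) (M - s)
      _ ≤ (2:ℝ) ^ M := pow_le_pow_right₀ one_le_two (Nat.sub_le M 1)
  have b3 : (K:ℝ) ^ M ≤ (M:ℝ) ^ M * (Nat.choose (K + M - 1) M : ℝ) := by
    have hfac : ((K:ℝ)) ^ M / (Nat.factorial M : ℝ) ≤ (Nat.choose (K + M - 1) M : ℝ) := by
      have := Nat.pow_le_choose (α := ℝ) M (K + M - 1)
      have hsub : K + M - 1 + 1 - M = K := by omega
      rwa [hsub] at this
    have hfacpos : (0:ℝ) < (Nat.factorial M : ℝ) := by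
      exact_mod_cast Nat.factorial_pos M
    have h1' : (K:ℝ) ^ M ≤ (Nat.factorial M : ℝ) * (Nat.choose (K + M - 1) M : ℝ) := by
      rw [div_le_iff₀ hfacpos] at hfac
      linarith [hfac]
    refine h1'.trans (mul_le_mul_of_nonneg_right ?_ hCpos.le)
    exact_mod_cast Nat.factorial_le_pow M
  have hnonneg : (0:ℝ) ≤ (Nat.choose K s : ℝ) := Nat.cast_nonneg _
  calc (Nat.choose K s * Nat.choose (M - 1) (M - s) : ℝ) * (K:ℝ) ^ M
      ≤ ((K:ℝ)^s * 2 ^ M) * ((M:ℝ) ^ M * (Nat.choose (K + M - 1) M : ℝ)) := by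
        apply mul_le_mul
        · exact mul_le_mul b1 b2 (Nat.cast_nonneg _) (by positivity)
        · exact b3
        · positivity
        · positivity
    _ = (2 * (M : ℝ)) ^ M * (K:ℝ) ^ s * (Nat.choose (K + M - 1) M : ℝ) := by
        rw [mul_pow]; ring
end

section
/- For natural numbers μ, M, K with 1 ≤ μ ≤ M ≤ K, the following inequality of real numbers holds: C(K,μ) · ( C(K+M−μ−1, M−μ) / C(K+M−1, M) )² ≤ M^{2μ}/K^{μ}. -/
/-!
By the subset-of-a-subset identity `C(n,M) C(M,μ) = C(n,μ) C(n-μ,M-μ)` with `n = K+M-1`, the ratio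
`C(K+M-μ-1, M-μ) / C(K+M-1, M)` equals `C(M,μ) / C(K+M-1,μ)`. Writing both binomials as falling
factorials over `μ!`, this is at most `M^μ / (K+M-μ)^μ ≤ (M/K)^μ`; together with `C(K,μ) ≤ K^μ`
the left-hand side is at most `K^μ (M/K)^(2μ) = M^(2μ)/K^μ`.
-/

namespace Nat

theorem cast_choose_sub_div_cast_choose {𝕜 : Type*} [Field 𝕜] [CharZero 𝕜] {n k s : ℕ}
    (hsk : s ≤ k) (hkn : k ≤ n) :
    ((n - s).choose (k - s) : 𝕜) / n.choose k = k.choose s / n.choose s := by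
  have hnk : (n.choose k : 𝕜) ≠ 0 := mod_cast (choose_pos hkn).ne'
  have hns : (n.choose s : 𝕜) ≠ 0 := mod_cast (choose_pos (hsk.trans hkn)).ne'
  rw [div_eq_div_iff hnk hns]
  norm_cast
  rw [mul_comm, ← choose_mul hsk, mul_comm]

theorem choose_mul_pow_le_pow_mul_choose {m n s K : ℕ} (h : K + s ≤ n + 1) :
    m.choose s * K ^ s ≤ m ^ s * n.choose s := by
  refine Nat.le_of_mul_le_mul_left ?_ s.factorial_pos
  calc s ! * (m.choose s * K ^ s) = m.descFactorial s * K ^ s := by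
        rw [descFactorial_eq_factorial_mul_choose, mul_assoc]
    _ ≤ m ^ s * n.descFactorial s :=
        Nat.mul_le_mul (descFactorial_le_pow m s)
          ((Nat.pow_le_pow_left (by omega) s).trans (pow_sub_le_descFactorial n s))
    _ = s ! * (m ^ s * n.choose s) := by
        rw [descFactorial_eq_factorial_mul_choose]; ring

theorem cast_choose_div_cast_choose_le {𝕜 : Type*} [Field 𝕜] [LinearOrder 𝕜]
    [IsStrictOrderedRing 𝕜] {m n s K : ℕ} (hK : 0 < K) (h : K + s ≤ n + 1) :
    (m.choose s : 𝕜) / n.choose s ≤ ((m : 𝕜) / K) ^ s := by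
  have hns : (0 : 𝕜) < n.choose s := mod_cast choose_pos (by omega)
  rw [div_pow, div_le_div_iff₀ hns (by positivity)]
  exact_mod_cast choose_mul_pow_le_pow_mul_choose h

end Nat

/-- For natural numbers `1 ≤ μ ≤ M ≤ K`,
`C(K,μ) · (C(K+M-μ-1, M-μ) / C(K+M-1, M))² ≤ M^(2μ)/K^μ`. -/
theorem statement14 (μ M K : ℕ) (h1 : 1 ≤ μ) (h2 : μ ≤ M) (h3 : M ≤ K) :
    (Nat.choose K μ : ℝ) *
        ((Nat.choose (K + M - μ - 1) (M - μ) : ℝ) / (Nat.choose (K + M - 1) M : ℝ)) ^ 2 ≤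
      (M : ℝ) ^ (2 * μ) / (K : ℝ) ^ μ := by
  have hK : 0 < K := by omega
  rw [show K + M - μ - 1 = K + M - 1 - μ by omega,
    Nat.cast_choose_sub_div_cast_choose h2 (by omega : M ≤ K + M - 1)]
  calc (K.choose μ : ℝ) * ((M.choose μ : ℝ) / (K + M - 1).choose μ) ^ 2
      ≤ (K : ℝ) ^ μ * (((M : ℝ) / K) ^ μ) ^ 2 := by
        gcongr
        · exact_mod_cast Nat.choose_le_pow K μ
        · exact Nat.cast_choose_div_cast_choose_le hK (by omega)
    _ = (M : ℝ) ^ (2 * μ) / (K : ℝ) ^ μ := by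
        rw [div_pow, mul_comm 2 μ, pow_mul]
        field_simp
end

section
/- Let X_1,…,X_n be arbitrary {0,1}-valued random variables on a probability space, and let X*_1,…,X*_n be mutually independent {0,1}-valued random variables such that for each i, X*_i is independent of (X_1,…,X_{i−1}). Assume that for every i and all x_1,…,x_{i−1} ∈ {0,1} with P(X_1 = x_1,…,X_{i−1} = x_{i−1}) > 0, one has P(X_i = 1 | X_1 = x_1,…,X_{i−1} = x_{i−1}) ≥ P(X*_i = 1). Then for every k ≥ 0: P(∑_{i=1}^n X_i ≤ k) ≤ P(∑_{i=1}^n X*_i ≤ k). -/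
/-!
Induct on the number of summands, comparing `S + X_m` with `S* + X*_m` where `S`, `S*` are
the partial sums. Write `p = P(X*_m = 1)` and `q = 1 - p`. Summing the hypothesis over the
atoms of `(X_1, …, X_{m-1})` gives `P(S = k, X_m = 0) ≤ q P(S = k)`, hence
`P(S + X_m ≤ k) ≤ P(S < k) + q P(S = k) = p P(S ≤ k - 1) + q P(S ≤ k)`.
The right-hand side is monotone in the distribution function of `S`, so the induction
hypothesis bounds it by the same expression for `S*`, which by independence of `X*_m` from
`S*` is exactly `P(S* + X*_m ≤ k)`.
-/

open MeasureTheory ProbabilityTheory ENNReal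

section

variable {Ω : Type*} [MeasurableSpace Ω] {μ : Measure Ω}

lemma measure_le_eq_measure_lt_add_measure_eq {S : Ω → ℕ} (hS : Measurable S) (k : ℕ) :
    μ {ω | S ω ≤ k} = μ {ω | S ω < k} + μ {ω | S ω = k} := by
  rw [← measure_union _ (measurableSet_eq_fun hS measurable_const)]
  · congr 1
    ext ω
    exact Nat.le_iff_lt_or_eq
  · exact Set.disjoint_left.2 fun ω (h₁ : S ω < k) (h₂ : S ω = k) => h₁.ne h₂

lemma measure_lt_le_of_forall_measure_le {μ' : Measure Ω} {S S' : Ω → ℕ}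
    (hle : ∀ k, μ {ω | S ω ≤ k} ≤ μ' {ω | S' ω ≤ k}) (k : ℕ) :
    μ {ω | S ω < k} ≤ μ' {ω | S' ω < k} := by
  cases k with
  | zero => simp
  | succ k => simpa only [Nat.lt_succ_iff] using hle k

lemma measure_add_le_eq_of_le_one {S Z : Ω → ℕ} (hS : Measurable S) (hZ : Measurable Z)
    (hZ01 : ∀ ω, Z ω ≤ 1) (k : ℕ) :
    μ {ω | S ω + Z ω ≤ k} = μ {ω | S ω < k} + μ ({ω | Z ω = 0} ∩ {ω | S ω = k}) := by
  rw [← measure_union _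
    ((measurableSet_eq_fun hZ measurable_const).inter (measurableSet_eq_fun hS measurable_const))]
  · congr 1
    ext ω
    simp only [Set.mem_ofPred_eq, Set.mem_union, Set.mem_inter_iff]
    have := hZ01 ω
    omega
  · exact Set.disjoint_left.2 fun ω (h₁ : S ω < k) h₂ => h₁.ne h₂.2

lemma measure_eq_zero_inter_add_measure_eq_one_inter {Z : Ω → ℕ} (hZ : Measurable Z)
    (hZ01 : ∀ ω, Z ω ≤ 1) (A : Set Ω) :
    μ ({ω | Z ω = 0} ∩ A) + μ ({ω | Z ω = 1} ∩ A) = μ A := by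
  have hdiff : {ω | Z ω = 0} ∩ A = A \ {ω | Z ω = 1} := by
    ext ω
    have := hZ01 ω
    simp only [Set.mem_inter_iff, Set.mem_sdiff, Set.mem_ofPred_eq, and_comm (a := Z ω = 0)]
    exact and_congr_right fun _ => by omega
  rw [hdiff, Set.inter_comm, add_comm,
    measure_inter_add_sdiff _ (measurableSet_eq_fun hZ measurable_const)]

lemma measure_eq_zero_inter_le_of_le_measure_eq_one_inter [IsFiniteMeasure μ] {Z : Ω → ℕ}
    (hZ : Measurable Z) (hZ01 : ∀ ω, Z ω ≤ 1) {p q : ℝ≥0∞} (hpq : q + p = 1) {A : Set Ω}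
    (h : p * μ A ≤ μ ({ω | Z ω = 1} ∩ A)) :
    μ ({ω | Z ω = 0} ∩ A) ≤ q * μ A := by
  refine ENNReal.le_of_add_le_add_right
    (mul_ne_top (le_add_self.trans_eq hpq |>.trans_lt one_lt_top).ne (measure_ne_top μ A)) ?_
  calc μ ({ω | Z ω = 0} ∩ A) + p * μ A
      ≤ μ ({ω | Z ω = 0} ∩ A) + μ ({ω | Z ω = 1} ∩ A) := by gcongr
    _ = (q + p) * μ A := by
      rw [measure_eq_zero_inter_add_measure_eq_one_inter hZ hZ01, hpq, one_mul]
    _ = q * μ A + p * μ A := add_mul _ _ _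

lemma mul_measure_preimage_le_of_forall_singleton {α : Type*} [MeasurableSpace α] [Countable α]
    [MeasurableSingletonClass α] {Y : Ω → α} (hY : Measurable Y) {E : Set Ω} {p : ℝ≥0∞}
    (h : ∀ x, μ (Y ⁻¹' {x}) ≠ 0 → p * μ (Y ⁻¹' {x}) ≤ μ (E ∩ Y ⁻¹' {x})) (A : Set α) :
    p * μ (Y ⁻¹' A) ≤ μ (E ∩ Y ⁻¹' A) := by
  have hfib (ν : Measure Ω) : ∑' x : A, ν (Y ⁻¹' {↑x}) = ν (Y ⁻¹' A) :=
    tsum_measure_preimage_singleton A.to_countable fun x _ => hY (measurableSet_singleton x)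
  calc p * μ (Y ⁻¹' A) = ∑' x : A, p * μ (Y ⁻¹' {↑x}) := by rw [← hfib μ, ENNReal.tsum_mul_left]
    _ ≤ ∑' x : A, μ.restrict E (Y ⁻¹' {↑x}) := by
      refine ENNReal.tsum_le_tsum fun x => ?_
      rw [Measure.restrict_apply (hY (measurableSet_singleton _)), Set.inter_comm]
      by_cases h0 : μ (Y ⁻¹' {↑x}) = 0
      · simp [h0]
      · exact h x h0
    _ = μ (E ∩ Y ⁻¹' A) := by
      rw [hfib, Measure.restrict_apply (hY A.to_countable.measurableSet), Set.inter_comm]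

lemma measure_add_le_le_of_indepFun [IsProbabilityMeasure μ] {S Ss Z Zs : Ω → ℕ}
    (hS : Measurable S) (hSs : Measurable Ss) (hZ : Measurable Z) (hZs : Measurable Zs)
    (hZ01 : ∀ ω, Z ω ≤ 1) (hZs01 : ∀ ω, Zs ω ≤ 1) (hind : IndepFun Zs Ss μ)
    (hle : ∀ k, μ {ω | S ω ≤ k} ≤ μ {ω | Ss ω ≤ k})
    (hdom : ∀ k, μ {ω | Zs ω = 1} * μ {ω | S ω = k} ≤ μ ({ω | Z ω = 1} ∩ {ω | S ω = k}))
    (k : ℕ) : μ {ω | S ω + Z ω ≤ k} ≤ μ {ω | Ss ω + Zs ω ≤ k} := by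
  set p := μ {ω | Zs ω = 1}
  set q := μ {ω | Zs ω = 0}
  have hpq : q + p = 1 := by
    simpa using measure_eq_zero_inter_add_measure_eq_one_inter (μ := μ) hZs hZs01 Set.univ
  have hmix {T : Ω → ℕ} (hT : Measurable T) :
      μ {ω | T ω < k} + q * μ {ω | T ω = k} = p * μ {ω | T ω < k} + q * μ {ω | T ω ≤ k} := by
    rw [measure_le_eq_measure_lt_add_measure_eq hT, mul_add, ← add_assoc, ← add_mul, add_comm p,
      hpq, one_mul]
  calc μ {ω | S ω + Z ω ≤ k}
      = μ {ω | S ω < k} + μ ({ω | Z ω = 0} ∩ {ω | S ω = k}) :=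
        measure_add_le_eq_of_le_one hS hZ hZ01 k
    _ ≤ μ {ω | S ω < k} + q * μ {ω | S ω = k} := by
        gcongr
        exact measure_eq_zero_inter_le_of_le_measure_eq_one_inter hZ hZ01 hpq (hdom k)
    _ = p * μ {ω | S ω < k} + q * μ {ω | S ω ≤ k} := hmix hS
    _ ≤ p * μ {ω | Ss ω < k} + q * μ {ω | Ss ω ≤ k} := by
        gcongr p * ?_ + q * ?_
        · exact measure_lt_le_of_forall_measure_le hle k
        · exact hle k
    _ = μ {ω | Ss ω < k} + μ ({ω | Zs ω = 0} ∩ {ω | Ss ω = k}) := by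
        rw [← hmix hSs]
        congr 2
        exact (hind.measure_inter_preimage_eq_mul _ _ (measurableSet_singleton 0)
          (measurableSet_singleton k)).symm
    _ = μ {ω | Ss ω + Zs ω ≤ k} := (measure_add_le_eq_of_le_one hSs hZs hZs01 k).symm

lemma ProbabilityTheory.iIndepFun.indepFun_sum_castLE {n m : ℕ} {Xs : Fin n → Ω → ℕ}
    (hmeas : ∀ i, Measurable (Xs i)) (hindep : iIndepFun Xs μ) (hm : m ≤ n) {i : Fin n}
    (hmi : m ≤ i) : IndepFun (Xs i) (fun ω => ∑ j : Fin m, Xs (Fin.castLE hm j) ω) μ := by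
  classical
  have hi : i ∉ Finset.univ.image (Fin.castLE hm) := by
    simp only [Finset.mem_image, Finset.mem_univ, true_and, not_exists]
    exact fun j hj => by have := congrArg Fin.val hj; simp at this; omega
  convert (hindep.indepFun_finsetSum_of_notMem hmeas hi).symm using 1
  ext ω
  rw [Finset.sum_apply, Finset.sum_image fun a _ b _ h => Fin.castLE_injective hm h]

lemma measure_sum_castLE_le [IsProbabilityMeasure μ] {n : ℕ} {X Xs : Fin n → Ω → ℕ}
    (hX01 : ∀ i ω, X i ω ≤ 1) (hXs01 : ∀ i ω, Xs i ω ≤ 1)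
    (hXmeas : ∀ i, Measurable (X i)) (hXsmeas : ∀ i, Measurable (Xs i))
    (hindep : iIndepFun Xs μ)
    (hdom : ∀ (i : Fin n) (x : Fin i.val → ℕ),
      0 < μ {ω | ∀ j : Fin i.val, X (Fin.castLE i.isLt.le j) ω = x j} →
      μ {ω | Xs i ω = 1} * μ {ω | ∀ j : Fin i.val, X (Fin.castLE i.isLt.le j) ω = x j} ≤
        μ ({ω | X i ω = 1} ∩ {ω | ∀ j : Fin i.val, X (Fin.castLE i.isLt.le j) ω = x j}))
    (m : ℕ) (hm : m ≤ n) (k : ℕ) :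
    μ {ω | ∑ j : Fin m, X (Fin.castLE hm j) ω ≤ k} ≤
      μ {ω | ∑ j : Fin m, Xs (Fin.castLE hm j) ω ≤ k} := by
  induction m generalizing k with
  | zero => simp
  | succ m ih =>
    have hm' : m ≤ n := by omega
    let i : Fin n := ⟨m, hm⟩
    let Y : Ω → Fin m → ℕ := fun ω j => X (Fin.castLE hm' j) ω
    have hY : Measurable Y := measurable_pi_lambda _ fun j => hXmeas _
    have hdomY (x : Fin m → ℕ) (hx : μ (Y ⁻¹' {x}) ≠ 0) :
        μ {ω | Xs i ω = 1} * μ (Y ⁻¹' {x}) ≤ μ ({ω | X i ω = 1} ∩ Y ⁻¹' {x}) := by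
      have hfib : Y ⁻¹' {x} = {ω | ∀ j : Fin m, X (Fin.castLE hm' j) ω = x j} := by
        ext ω
        simp [Y, funext_iff]
      rw [hfib] at hx ⊢
      exact hdom i x (pos_iff_ne_zero.2 hx)
    simp only [Fin.sum_univ_castSucc]
    exact measure_add_le_le_of_indepFun (Finset.measurable_sum _ fun j _ => hXmeas _)
      (Finset.measurable_sum _ fun j _ => hXsmeas _) (hXmeas i) (hXsmeas i) (hX01 i) (hXs01 i)
      (hindep.indepFun_sum_castLE hXsmeas hm' le_rfl) (ih hm')
      (fun k => mul_measure_preimage_le_of_forall_singleton hY hdomY {x | ∑ j, x j = k}) k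

end

theorem statement16_general {Ω : Type*} [MeasurableSpace Ω] (μ : Measure Ω)
    [IsProbabilityMeasure μ] (n : ℕ) (X Xs : Fin n → Ω → ℕ)
    (hX01 : ∀ i ω, X i ω ≤ 1) (hXs01 : ∀ i ω, Xs i ω ≤ 1)
    (hXmeas : ∀ i, Measurable (X i)) (hXsmeas : ∀ i, Measurable (Xs i))
    (hindep : iIndepFun Xs μ)
    (hdom : ∀ (i : Fin n) (x : Fin i.val → ℕ),
      0 < μ {ω | ∀ j : Fin i.val, X (Fin.castLE i.isLt.le j) ω = x j} →
      μ {ω | Xs i ω = 1} * μ {ω | ∀ j : Fin i.val, X (Fin.castLE i.isLt.le j) ω = x j} ≤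
        μ ({ω | X i ω = 1} ∩ {ω | ∀ j : Fin i.val, X (Fin.castLE i.isLt.le j) ω = x j})) :
    ∀ k : ℕ, μ {ω | ∑ i, X i ω ≤ k} ≤ μ {ω | ∑ i, Xs i ω ≤ k} :=
  measure_sum_castLE_le hX01 hXs01 hXmeas hXsmeas hindep hdom n le_rfl

/-- deviation bound under moderate independence.  Let
`X_1,…,X_n` be arbitrary `{0,1}`-valued random variables (encoded as `ℕ`-valued with
values `≤ 1`), and let `X*_1,…,X*_n` be mutually independent `{0,1}`-valued random
variables such that each `X*_i` is independent of `(X_1,…,X_{i-1})`.  If for every `i`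
and every outcome `x` of `(X_1,…,X_{i-1})` of positive probability,
`P(X_i = 1 | X_1 = x_1,…,X_{i-1} = x_{i-1}) ≥ P(X*_i = 1)`, then for every `k ≥ 0`,
`P(∑ X_i ≤ k) ≤ P(∑ X*_i ≤ k)`. -/
theorem statement16 {Ω : Type*} [MeasurableSpace Ω] (μ : Measure Ω)
    [IsProbabilityMeasure μ] (n : ℕ) (X Xs : Fin n → Ω → ℕ)
    (hX01 : ∀ i ω, X i ω ≤ 1) (hXs01 : ∀ i ω, Xs i ω ≤ 1)
    (hXmeas : ∀ i, Measurable (X i)) (hXsmeas : ∀ i, Measurable (Xs i))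
    (hindep : iIndepFun Xs μ)
    (hindep2 : ∀ i : Fin n,
      IndepFun (Xs i) (fun ω => fun j : Fin i.val => X (Fin.castLE i.isLt.le j) ω) μ)
    (hdom : ∀ (i : Fin n) (x : Fin i.val → ℕ),
      0 < μ {ω | ∀ j : Fin i.val, X (Fin.castLE i.isLt.le j) ω = x j} →
      μ {ω | Xs i ω = 1} * μ {ω | ∀ j : Fin i.val, X (Fin.castLE i.isLt.le j) ω = x j} ≤
        μ ({ω | X i ω = 1} ∩ {ω | ∀ j : Fin i.val, X (Fin.castLE i.isLt.le j) ω = x j})) :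
    ∀ k : ℕ, μ {ω | ∑ i, X i ω ≤ k} ≤ μ {ω | ∑ i, Xs i ω ≤ k} :=
  statement16_general μ n X Xs hX01 hXs01 hXmeas hXsmeas hindep hdom
end
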